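/- arXiv:2203.13536 — 3 statements merged into one kernel-verified Lean document; each statement's English description precedes it below -/
import Mathlib

section
/- Let M, a_v, a_m, R_u, R_d, α, β be positive reals. Define T_v(η) = ηM/a_v, T_MEC(η) = (1−η)M/a_m + β(1−η)M/R_u + α(1−η)M/R_d, a_1 = 1/a_m + β/R_u + α/R_d, and η* = 1 − 1/(a_v·a_1 + 1). Then η* ∈ [0,1] and for every η ∈ [0,1], max(T_v(η*), T_MEC(η*)) ≤ max(T_v(η), T_MEC(η)); that is, η* minimizes the overall latency max(T_v(η), T_MEC(η)) over [0,1]. (Proposition 3) -/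
/-- Proposition 3: the task partition ratio `η* = 1 - 1/(a_v a_1 + 1)` lies in `[0,1]`
and minimizes the overall latency `max (T_v η) (T_MEC η)` over `η ∈ [0,1]`. -/
theorem stmt_0
    (M av am Ru Rd α β : ℝ)
    (hM : 0 < M) (hav : 0 < av) (ham : 0 < am) (hRu : 0 < Ru) (hRd : 0 < Rd)
    (hα : 0 < α) (hβ : 0 < β)
    (Tv TMEC : ℝ → ℝ)
    (hTv : ∀ η, Tv η = η * M / av)
    (hTMEC : ∀ η, TMEC η = (1 - η) * M / am + β * (1 - η) * M / Ru + α * (1 - η) * M / Rd)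
    (a1 ηstar : ℝ)
    (ha1 : a1 = 1 / am + β / Ru + α / Rd)
    (hηstar : ηstar = 1 - 1 / (av * a1 + 1)) :
    ηstar ∈ Set.Icc (0 : ℝ) 1 ∧
      ∀ η ∈ Set.Icc (0 : ℝ) 1,
        max (Tv ηstar) (TMEC ηstar) ≤ max (Tv η) (TMEC η) := by
  have ha1pos : 0 < a1 := by
    rw [ha1]; positivity
  have hden : 0 < av * a1 + 1 := by positivity
  have hmem : ηstar ∈ Set.Icc (0 : ℝ) 1 := by
    constructor
    · rw [hηstar]
      have h1 : 1 / (av * a1 + 1) ≤ 1 := by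
        rw [div_le_one hden]; nlinarith [mul_pos hav ha1pos]
      linarith
    · rw [hηstar]
      have : 0 < 1 / (av * a1 + 1) := by positivity
      linarith
  refine ⟨hmem, ?_⟩
  -- rewrite TMEC as (1-η)*M*a1
  have hT : ∀ η, TMEC η = (1 - η) * M * a1 := by
    intro η
    rw [hTMEC, ha1]
    field_simp
  have heq : Tv ηstar = TMEC ηstar := by
    rw [hTv, hT, hηstar]
    field_simp
    ring
  intro η hη
  rcases le_total η ηstar with h | h
  · -- TMEC is decreasing: TMEC ηstar ≤ TMEC η
    have : TMEC ηstar ≤ TMEC η := by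
      rw [hT, hT]
      have : (1 - ηstar) ≤ (1 - η) := by linarith
      nlinarith [mul_pos hM ha1pos]
    calc max (Tv ηstar) (TMEC ηstar) = TMEC ηstar := by rw [heq]; simp
      _ ≤ TMEC η := this
      _ ≤ max (Tv η) (TMEC η) := le_max_right _ _
  · have : Tv ηstar ≤ Tv η := by
      rw [hTv, hTv]
      have := hM.le
      gcongr
    calc max (Tv ηstar) (TMEC ηstar) = Tv ηstar := by rw [heq]; simp
      _ ≤ Tv η := this
      _ ≤ max (Tv η) (TMEC η) := le_max_left _ _
end

section
/- For every integer n ≥ 1 and real ρ > 0, (1/(n−1)!) ∫₀^∞ ln(1 + x/ρ) x^{n−1} e^{−x} dx = e^{ρ} ∑_{k=0}^{n−1} E_{k+1}(ρ), where E_τ(ρ) = ∫₁^∞ e^{−ρt} t^{−τ} dt is the exponential integral of order τ. (Closed form of the ergodic MRC capacity, used as Eqn. (47) in the proof of Proposition 1 and for Φ in Propositions 1 and 2) -/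
/-!
Since `Γ(m + 1, x) = m! e^{-x} ∑_{k ≤ m} x^k / k!` is an antiderivative of `-x^m e^{-x}`,
integrating by parts turns `∫₀^∞ ln(1 + x/ρ) x^m e^{-x} dx` into
`∑_{k ≤ m} (m!/k!) ∫₀^∞ e^{-x} x^k / (ρ + x) dx`. Each of these integrals is `k! e^ρ E_{k+1}(ρ)`:
for `k = 0` by the substitution `t = 1 + x/ρ`, and then by induction on `k`, because writing
`x^{k+1} = x^k (ρ + x) - ρ x^k` on one side and integrating by parts in `E_{k+1}` on the other
give the same recurrence.
-/

open Real Set MeasureTheory Filter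
open scoped Topology Nat

noncomputable def expIntegralE (τ : ℕ) (z : ℝ) : ℝ :=
  ∫ t in Ioi (1 : ℝ), exp (-z * t) / t ^ τ

lemma integrableOn_exp_neg_mul_pow (k : ℕ) :
    IntegrableOn (fun x : ℝ => exp (-x) * x ^ k) (Ioi 0) := by
  refine (GammaIntegral_convergent (s := (k : ℝ) + 1) (by positivity)).congr_fun
    (fun x _ => ?_) measurableSet_Ioi
  simp only [add_sub_cancel_right, rpow_natCast]

lemma integral_exp_neg_mul_pow (k : ℕ) : ∫ x in Ioi (0 : ℝ), exp (-x) * x ^ k = k ! := by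
  rw [← Gamma_nat_eq_factorial, Gamma_eq_integral (by positivity)]
  refine setIntegral_congr_fun measurableSet_Ioi (fun x _ => ?_)
  simp only [add_sub_cancel_right, rpow_natCast]

section ShiftedGammaIntegral

variable {ρ : ℝ}

lemma integrableOn_exp_neg_mul_pow_div_add (hρ : 0 < ρ) (k : ℕ) :
    IntegrableOn (fun x : ℝ => exp (-x) * x ^ k / (ρ + x)) (Ioi 0) := by
  refine ((integrableOn_exp_neg_mul_pow k).div_const ρ).mono'
    (Measurable.aestronglyMeasurable (by fun_prop)) ?_
  refine (ae_restrict_iff' measurableSet_Ioi).2 (ae_of_all _ fun x (hx : 0 < x) => ?_)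
  rw [norm_of_nonneg (by positivity)]
  gcongr
  linarith

lemma integral_exp_neg_mul_pow_succ_div_add (hρ : 0 < ρ) (k : ℕ) :
    ∫ x in Ioi (0 : ℝ), exp (-x) * x ^ (k + 1) / (ρ + x)
      = (k ! : ℝ) - ρ * ∫ x in Ioi (0 : ℝ), exp (-x) * x ^ k / (ρ + x) := by
  have hsplit : ∀ x ∈ Ioi (0 : ℝ), exp (-x) * x ^ (k + 1) / (ρ + x)
      = exp (-x) * x ^ k - ρ * (exp (-x) * x ^ k / (ρ + x)) := fun x (hx : 0 < x) => by
    field_simp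
    ring
  rw [setIntegral_congr_fun measurableSet_Ioi hsplit,
    integral_sub (integrableOn_exp_neg_mul_pow k)
      ((integrableOn_exp_neg_mul_pow_div_add hρ k).const_mul ρ),
    integral_exp_neg_mul_pow, integral_const_mul]

end ShiftedGammaIntegral

section ExpIntegralE

variable {ρ : ℝ}

lemma integrableOn_exp_neg_mul_div_pow (hρ : 0 < ρ) (k : ℕ) :
    IntegrableOn (fun t : ℝ => exp (-ρ * t) / t ^ k) (Ioi 1) := by
  refine (exp_neg_integrableOn_Ioi 1 hρ).mono' (Measurable.aestronglyMeasurable (by fun_prop)) ?_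
  refine (ae_restrict_iff' measurableSet_Ioi).2 (ae_of_all _ fun t (ht : 1 < t) => ?_)
  rw [norm_of_nonneg (by positivity), neg_mul]
  exact div_le_self (exp_pos _).le (one_le_pow₀ ht.le)

lemma expIntegralE_succ_eq_integral (hρ : 0 < ρ) (k : ℕ) :
    expIntegralE (k + 1) ρ
      = exp (-ρ) * ρ ^ k * ∫ x in Ioi (0 : ℝ), exp (-x) / (ρ + x) ^ (k + 1) := by
  have himage : (fun x : ℝ => 1 + x / ρ) '' Ioi 0 = Ioi 1 := by
    ext t
    simp only [mem_image, mem_Ioi]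
    constructor
    · rintro ⟨x, hx, rfl⟩
      have : 0 < x / ρ := by positivity
      linarith
    · intro ht
      exact ⟨ρ * (t - 1), by nlinarith, by field_simp; ring⟩
  have hderiv : ∀ x ∈ Ioi (0 : ℝ), HasDerivWithinAt (fun x : ℝ => 1 + x / ρ) ρ⁻¹ (Ioi 0) x :=
    fun x _ => by simpa using (((hasDerivAt_id x).div_const ρ).const_add 1).hasDerivWithinAt
  have hinj : InjOn (fun x : ℝ => 1 + x / ρ) (Ioi 0) := fun a _ b _ h => by
    field_simp at h
    linarith
  rw [expIntegralE, ← himage,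
    integral_image_eq_integral_abs_deriv_smul measurableSet_Ioi hderiv hinj, ← integral_const_mul]
  refine setIntegral_congr_fun measurableSet_Ioi (fun x (hx : 0 < x) => ?_)
  rw [abs_of_pos (inv_pos.2 hρ), smul_eq_mul, show -ρ * (1 + x / ρ) = -ρ + -x by field_simp; ring,
    exp_add, show 1 + x / ρ = (ρ + x) / ρ by field_simp, div_pow]
  field_simp
  ring

lemma expIntegralE_recurrence (hρ : 0 < ρ) (k : ℕ) :
    ρ * expIntegralE k ρ + k * expIntegralE (k + 1) ρ = exp (-ρ) := by
  set f : ℝ → ℝ := fun t => exp (-ρ * t) / t ^ k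
  have hderiv : ∀ t ∈ Ici (1 : ℝ),
      HasDerivAt f (-(ρ * (exp (-ρ * t) / t ^ k) + k * (exp (-ρ * t) / t ^ (k + 1)))) t := by
    intro t (ht : 1 ≤ t)
    have ht0 : t ≠ 0 := by positivity
    have hexp : HasDerivAt (fun t : ℝ => exp (-ρ * t)) (exp (-ρ * t) * -ρ) t := by
      simpa using ((hasDerivAt_id t).const_mul (-ρ)).exp
    refine (hexp.div (hasDerivAt_pow k t) (by positivity)).congr_deriv ?_
    rcases k with _ | k
    · simp only [pow_zero, div_one, CharP.cast_eq_zero, zero_mul]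
      ring
    · simp only [Nat.add_sub_cancel, Nat.cast_add, Nat.cast_one]
      field_simp
      ring
  have hint : ∀ j, IntegrableOn (fun t : ℝ => exp (-ρ * t) / t ^ j) (Ioi 1) :=
    integrableOn_exp_neg_mul_div_pow hρ
  have hlim : Tendsto f atTop (𝓝 0) := by
    have hexp : Tendsto (fun t : ℝ => exp (-ρ * t)) atTop (𝓝 0) :=
      tendsto_exp_atBot.comp (tendsto_id.const_mul_atTop_of_neg (neg_neg_iff_pos.mpr hρ))
    refine squeeze_zero' ?_ ?_ hexp <;> filter_upwards [eventually_ge_atTop (1 : ℝ)] with t ht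
    · positivity
    · exact div_le_self (exp_pos _).le (one_le_pow₀ ht)
  have hftc := integral_Ioi_of_hasDerivAt_of_tendsto' hderiv
    (((hint k).const_mul ρ).add ((hint (k + 1)).const_mul k)).neg hlim
  rw [integral_neg, integral_add ((hint k).const_mul ρ) ((hint (k + 1)).const_mul k),
    integral_const_mul, integral_const_mul] at hftc
  simp only [f, one_pow, div_one, mul_one] at hftc
  rw [expIntegralE, expIntegralE]
  linarith

lemma integral_exp_neg_mul_pow_div_add (hρ : 0 < ρ) (k : ℕ) :
    ∫ x in Ioi (0 : ℝ), exp (-x) * x ^ k / (ρ + x) = k ! * exp ρ * expIntegralE (k + 1) ρ := by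
  have hexp : exp ρ * exp (-ρ) = 1 := by rw [← exp_add, add_neg_cancel, exp_zero]
  induction k with
  | zero =>
    simp only [pow_zero, mul_one, zero_add, Nat.factorial_zero, Nat.cast_one, one_mul,
      expIntegralE_succ_eq_integral hρ 0, pow_one, ← mul_assoc, hexp]
  | succ k ih =>
    have hrec := expIntegralE_recurrence hρ (k + 1)
    rw [integral_exp_neg_mul_pow_succ_div_add hρ k, ih, Nat.factorial_succ]
    push_cast at hrec ⊢
    linear_combination (-(k ! : ℝ) * exp ρ) * hrec - (k ! : ℝ) * hexp

end ExpIntegralE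

-- The upper incomplete gamma function `Γ(m + 1, x) = ∫ₓ^∞ t^m e^{-t} dt`, in closed form.
noncomputable def upperIncGamma (m : ℕ) (x : ℝ) : ℝ :=
  ∑ k ∈ Finset.range (m + 1), (m ! / k ! : ℝ) * (x ^ k * exp (-x))

lemma upperIncGamma_succ (m : ℕ) (x : ℝ) :
    upperIncGamma (m + 1) x = (m + 1) * upperIncGamma m x + x ^ (m + 1) * exp (-x) := by
  rw [upperIncGamma, Finset.sum_range_succ, upperIncGamma, Finset.mul_sum, div_self (by positivity),
    one_mul]
  congr 1
  refine Finset.sum_congr rfl fun k _ => ?_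
  rw [Nat.factorial_succ]
  push_cast
  ring

lemma hasDerivAt_upperIncGamma (m : ℕ) (x : ℝ) :
    HasDerivAt (upperIncGamma m) (-(x ^ m * exp (-x))) x := by
  have hexp : HasDerivAt (fun x : ℝ => exp (-x)) (-exp (-x)) x := by
    simpa using (hasDerivAt_neg x).exp
  induction m with
  | zero =>
    have hzero : upperIncGamma 0 = fun x => exp (-x) := by ext; simp [upperIncGamma]
    simpa [hzero] using hexp
  | succ m ih =>
    have hpow := (hasDerivAt_pow (m + 1) x).mul hexp
    refine ((ih.const_mul ((m : ℝ) + 1)).add hpow).congr_of_eventuallyEq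
      (Eventually.of_forall fun y => upperIncGamma_succ m y) |>.congr_deriv ?_
    push_cast
    ring

lemma upperIncGamma_nonneg (m : ℕ) {x : ℝ} (hx : 0 ≤ x) : 0 ≤ upperIncGamma m x :=
  Finset.sum_nonneg fun _ _ => by positivity

lemma tendsto_mul_upperIncGamma_atTop (m : ℕ) :
    Tendsto (fun x => x * upperIncGamma m x) atTop (𝓝 0) := by
  have := tendsto_finsetSum (Finset.range (m + 1)) fun k _ =>
    (tendsto_pow_mul_exp_neg_atTop_nhds_zero (k + 1)).const_mul (m ! / k ! : ℝ)
  simp only [mul_zero, Finset.sum_const_zero] at this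
  refine this.congr fun x => ?_
  rw [upperIncGamma, Finset.mul_sum]
  refine Finset.sum_congr rfl fun k _ => ?_
  ring

lemma upperIncGamma_div_add (m : ℕ) (ρ x : ℝ) :
    upperIncGamma m x / (ρ + x)
      = ∑ k ∈ Finset.range (m + 1), (m ! / k ! : ℝ) * (exp (-x) * x ^ k / (ρ + x)) := by
  rw [upperIncGamma, Finset.sum_div]
  refine Finset.sum_congr rfl fun k _ => ?_
  ring

section LogIntegral

variable {ρ : ℝ}

lemma integrableOn_upperIncGamma_div_add (hρ : 0 < ρ) (m : ℕ) :
    IntegrableOn (fun x => upperIncGamma m x / (ρ + x)) (Ioi 0) := by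
  simp only [upperIncGamma_div_add]
  exact integrable_finsetSum _ fun k _ => (integrableOn_exp_neg_mul_pow_div_add hρ k).const_mul _

lemma integral_upperIncGamma_div_add (hρ : 0 < ρ) (m : ℕ) :
    ∫ x in Ioi (0 : ℝ), upperIncGamma m x / (ρ + x)
      = m ! * exp ρ * ∑ k ∈ Finset.range (m + 1), expIntegralE (k + 1) ρ := by
  simp only [upperIncGamma_div_add]
  rw [integral_finsetSum _ fun k _ => (integrableOn_exp_neg_mul_pow_div_add hρ k).const_mul _,
    Finset.mul_sum]
  refine Finset.sum_congr rfl fun k _ => ?_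
  rw [integral_const_mul, integral_exp_neg_mul_pow_div_add hρ]
  field_simp

lemma log_one_add_div_le (hρ : 0 < ρ) {x : ℝ} (hx : 0 ≤ x) : log (1 + x / ρ) ≤ x / ρ := by
  linarith [log_le_sub_one_of_pos (show 0 < 1 + x / ρ by positivity)]

lemma integrableOn_log_one_add_div_mul_pow_mul_exp_neg (hρ : 0 < ρ) (m : ℕ) :
    IntegrableOn (fun x => log (1 + x / ρ) * x ^ m * exp (-x)) (Ioi 0) := by
  refine ((integrableOn_exp_neg_mul_pow (m + 1)).div_const ρ).mono'
    (Measurable.aestronglyMeasurable (by fun_prop)) ?_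
  refine (ae_restrict_iff' measurableSet_Ioi).2 (ae_of_all _ fun x (hx : 0 < x) => ?_)
  have hlog : 0 ≤ log (1 + x / ρ) := log_nonneg (by linarith [div_nonneg hx.le hρ.le])
  rw [norm_of_nonneg (by positivity)]
  calc log (1 + x / ρ) * x ^ m * exp (-x) ≤ x / ρ * x ^ m * exp (-x) := by
        gcongr
        exact log_one_add_div_le hρ hx.le
    _ = exp (-x) * x ^ (m + 1) / ρ := by ring

lemma integral_log_one_add_div_mul_pow_mul_exp_neg (hρ : 0 < ρ) (m : ℕ) :
    ∫ x in Ioi (0 : ℝ), log (1 + x / ρ) * x ^ m * exp (-x)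
      = ∫ x in Ioi (0 : ℝ), upperIncGamma m x / (ρ + x) := by
  set G : ℝ → ℝ := fun x => log (1 + x / ρ) * upperIncGamma m x
  have hderiv : ∀ x ∈ Ici (0 : ℝ), HasDerivAt G
      (upperIncGamma m x / (ρ + x) - log (1 + x / ρ) * x ^ m * exp (-x)) x := by
    intro x (hx : 0 ≤ x)
    have hlog : HasDerivAt (fun x => log (1 + x / ρ)) (ρ⁻¹ / (1 + x / ρ)) x :=
      (((hasDerivAt_id x).div_const ρ).const_add 1).log (by positivity) |>.congr_deriv (by simp)
    refine (hlog.mul (hasDerivAt_upperIncGamma m x)).congr_deriv ?_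
    field_simp
    ring
  have hlim : Tendsto G atTop (𝓝 0) := by
    have hbound := (tendsto_mul_upperIncGamma_atTop m).div_const ρ
    rw [zero_div] at hbound
    refine squeeze_zero' ?_ ?_ hbound <;> filter_upwards [eventually_ge_atTop 0] with x hx
    · exact mul_nonneg (log_nonneg (by linarith [div_nonneg hx hρ.le])) (upperIncGamma_nonneg m hx)
    · rw [mul_div_right_comm]
      exact mul_le_mul_of_nonneg_right (log_one_add_div_le hρ hx) (upperIncGamma_nonneg m hx)
  have hftc := integral_Ioi_of_hasDerivAt_of_tendsto' hderiv
    ((integrableOn_upperIncGamma_div_add hρ m).sub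
      (integrableOn_log_one_add_div_mul_pow_mul_exp_neg hρ m)) hlim
  rw [integral_sub (integrableOn_upperIncGamma_div_add hρ m)
    (integrableOn_log_one_add_div_mul_pow_mul_exp_neg hρ m)] at hftc
  simp only [G, zero_div, add_zero, log_one, zero_mul, sub_zero] at hftc
  linarith

end LogIntegral

/-- Closed form of the ergodic MRC capacity (Eqn. (47) / Φ in Propositions 1 and 2):
for `n ≥ 1` and `ρ > 0`,
`(1/(n-1)!) ∫₀^∞ ln(1 + x/ρ) x^{n-1} e^{-x} dx = e^ρ ∑_{k=0}^{n-1} E_{k+1}(ρ)`,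
where `E_τ(ρ) = ∫₁^∞ e^{-ρ t} t^{-τ} dt`. -/
theorem stmt_6
    (n : ℕ) (hn : 1 ≤ n) (ρ : ℝ) (hρ : 0 < ρ)
    (E : ℕ → ℝ → ℝ)
    (hE : ∀ τ : ℕ, ∀ z : ℝ, E τ z = ∫ t in Set.Ioi (1 : ℝ), Real.exp (-z * t) / t ^ τ) :
    (1 / (Nat.factorial (n - 1) : ℝ)) *
        ∫ x in Set.Ioi (0 : ℝ), Real.log (1 + x / ρ) * x ^ (n - 1) * Real.exp (-x) =
      Real.exp ρ * ∑ k ∈ Finset.range n, E (k + 1) ρ := by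
  obtain ⟨m, rfl⟩ : ∃ m, n = m + 1 := ⟨n - 1, by omega⟩
  obtain rfl : E = expIntegralE := funext fun τ => funext (hE τ)
  rw [Nat.add_sub_cancel, integral_log_one_add_div_mul_pow_mul_exp_neg hρ,
    integral_upperIncGamma_div_add hρ]
  field_simp
end

section
/- For every integer n ≥ 1, the function Φ̃ : (0, ∞) → ℝ defined by Φ̃(ρ) = e^{ρ} ∑_{k=0}^{n−1} E_{k+1}(ρ), where E_τ(ρ) = ∫₁^∞ e^{−ρt} t^{−τ} dt, is strictly decreasing on (0, ∞). (Monotonicity of Φ underlying Remark 2) -/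
/-!
Pulling `e^ρ` inside the integral gives `e^ρ E_τ(ρ) = ∫₁^∞ e^{-ρ(t-1)} t^{-τ} dt`, whose
integrand is strictly decreasing in `ρ` at every `t > 1`; so each summand of `Φ̃` is strictly
decreasing, and so is their (nonempty) sum.
-/

open MeasureTheory Real Set

theorem setIntegral_lt_setIntegral_of_forall_lt {X : Type*} [MeasurableSpace X] {μ : Measure X}
    {s : Set X} {f g : X → ℝ} (hs : MeasurableSet s) (hμs : μ s ≠ 0)
    (hf : IntegrableOn f s μ) (hg : IntegrableOn g s μ) (hlt : ∀ x ∈ s, f x < g x) :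
    ∫ x in s, f x ∂μ < ∫ x in s, g x ∂μ := by
  have hpos : ∀ x ∈ s, 0 < (g - f) x := fun x hx => sub_pos.mpr (hlt x hx)
  rw [← sub_pos, ← integral_sub hg hf]
  refine (setIntegral_pos_iff_support_of_nonneg_ae ?_ (hg.sub hf)).mpr ?_
  · filter_upwards [ae_restrict_mem hs] with x hx using (hpos x hx).le
  · have hsupp : Function.support (g - f) ∩ s = s :=
      inter_eq_right.mpr fun x hx => (hpos x hx).ne'
    rwa [hsupp, pos_iff_ne_zero]

theorem integrableOn_exp_sub_mul_div_pow {ρ : ℝ} (hρ : 0 < ρ) (τ : ℕ) :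
    IntegrableOn (fun t : ℝ => exp (ρ - ρ * t) / t ^ τ) (Ioi 1) := by
  have hdom : IntegrableOn (fun t : ℝ => exp ρ * exp (-ρ * t)) (Ioi 1) :=
    (exp_neg_integrableOn_Ioi 1 hρ).const_mul _
  refine hdom.mono' ?_ ?_
  · refine ContinuousOn.aestronglyMeasurable ?_ measurableSet_Ioi
    exact (by fun_prop : Continuous _).continuousOn.div (by fun_prop)
      fun t (ht : 1 < t) => pow_ne_zero _ (by linarith)
  · filter_upwards [ae_restrict_mem measurableSet_Ioi] with t (ht : 1 < t)
    rw [norm_of_nonneg (by positivity), ← exp_add, neg_mul, ← sub_eq_add_neg]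
    exact div_le_self (exp_pos _).le (one_le_pow₀ ht.le)

theorem exp_mul_integral_exp_neg_mul_div_pow (ρ : ℝ) (τ : ℕ) :
    exp ρ * ∫ t in Ioi (1 : ℝ), exp (-ρ * t) / t ^ τ
      = ∫ t in Ioi (1 : ℝ), exp (ρ - ρ * t) / t ^ τ := by
  rw [← integral_const_mul]
  congr 1 with t
  rw [mul_div_assoc', ← exp_add, neg_mul, ← sub_eq_add_neg]

theorem strictAntiOn_integral_exp_sub_mul_div_pow (τ : ℕ) :
    StrictAntiOn (fun ρ : ℝ => ∫ t in Ioi (1 : ℝ), exp (ρ - ρ * t) / t ^ τ) (Ioi 0) := by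
  intro a (ha : 0 < a) b (hb : 0 < b) hab
  refine setIntegral_lt_setIntegral_of_forall_lt measurableSet_Ioi (by simp)
    (integrableOn_exp_sub_mul_div_pow hb τ) (integrableOn_exp_sub_mul_div_pow ha τ) ?_
  intro t (ht : 1 < t)
  have hexp : exp (b - b * t) < exp (a - a * t) := exp_lt_exp.mpr (by nlinarith)
  exact div_lt_div_of_pos_right hexp (pow_pos (by linarith) _)

/-- Monotonicity of `Φ̃` underlying Remark 2: for `n ≥ 1`, the function
`Φ̃(ρ) = e^ρ ∑_{k=0}^{n-1} E_{k+1}(ρ)`, with `E_τ(ρ) = ∫₁^∞ e^{-ρ t} t^{-τ} dt`,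
is strictly decreasing on `(0, ∞)`. -/
theorem stmt_7
    (n : ℕ) (hn : 1 ≤ n)
    (E : ℕ → ℝ → ℝ)
    (hE : ∀ τ : ℕ, ∀ z : ℝ, E τ z = ∫ t in Set.Ioi (1 : ℝ), Real.exp (-z * t) / t ^ τ) :
    StrictAntiOn (fun ρ => Real.exp ρ * ∑ k ∈ Finset.range n, E (k + 1) ρ)
      (Set.Ioi (0 : ℝ)) := by
  intro a ha b hb hab
  simp only [hE, Finset.mul_sum, exp_mul_integral_exp_neg_mul_div_pow]
  refine Finset.sum_lt_sum_of_nonempty (Finset.nonempty_range_iff.mpr (by omega)) ?_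
  exact fun k _ => strictAntiOn_integral_exp_sub_mul_div_pow (k + 1) ha hb hab
end
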